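/- For every integer n ≥ 1, the following identity holds in the field ℚ(Q, r, X_1, …, X_n): ( ∏_{i=1}^n (Q+X_i) − ∏_{i=1}^n X_i(1+X_i) ) · ∏_{1≤i<j≤n} (X_j−X_i)·(Q(1+X_i)(1+X_j)+rX_iX_j) = ∏_{1≤i<j≤n} (X_j−X_i)·(Q(1+X_i)(1+X_j)+rX_iX_j) · Σ_{k=1}^n (Q−X_k^2) · ∏_{1≤j≤n, j≠k} [ X_j(1+X_j)·(Q+(Q+r)X_k+X_j+X_kX_j)·(Q−X_jX_k) ] / [ (X_j−X_k)·(Q(1+X_j)(1+X_k)+rX_jX_k) ]. -/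

import Mathlib

noncomputable section

/-- The field `ℚ(Q, r, X_1, …, X_n)` of rational functions. -/
abbrev RF (n : ℕ) : Type := FractionRing (MvPolynomial (Fin n ⊕ Fin 2) ℚ)

/-- The variable `X_i`. -/
def Xv (n : ℕ) (i : Fin n) : RF n :=
  algebraMap (MvPolynomial (Fin n ⊕ Fin 2) ℚ) (RF n) (MvPolynomial.X (Sum.inl i))

/-- The variable `Q`. -/
def Qv (n : ℕ) : RF n :=
  algebraMap (MvPolynomial (Fin n ⊕ Fin 2) ℚ) (RF n) (MvPolynomial.X (Sum.inr 0))

/-- The variable `r`. -/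
def rv (n : ℕ) : RF n :=
  algebraMap (MvPolynomial (Fin n ⊕ Fin 2) ℚ) (RF n) (MvPolynomial.X (Sum.inr 1))

end

/-!
With `u i = Q + X i`, `v i = X i * (1 + X i)` and the nodes
`w i = (Q * (1 + X i) + X i * (1 + r + X i)) / (X i * (1 + X i))`, the polynomial
`∏ j, (u j * t - v j * w j) - (∏ j, u j) * ∏ j, (t - w j)` has degree `< n`, so its value at
`t = 0` is given by Lagrange interpolation at the nodes `w k`. This is the partial-fraction identity
`∏ u - ∏ v = ∑ k, (u k - v k) * ∏ j ≠ k, (u j * w k - v j * w j) / (w k - w j)`, and for these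
nodes each factor `(u j * w k - v j * w j) / (w k - w j)` is the one in the sum of the theorem.
The product over pairs `i < j` is only a common factor of both sides.
-/

open Finset Polynomial

namespace Polynomial

variable {R : Type*} [CommRing R] {ι : Type*} (s : Finset ι) (a b : ι → R)

theorem natDegree_prod_linear_le :
    (∏ i ∈ s, (C (a i) * X + C (b i))).natDegree ≤ #s := by
  refine (natDegree_prod_le _ _).trans ?_
  simpa using sum_le_sum fun i (_ : i ∈ s) => natDegree_linear_le (a := a i) (b := b i)

theorem coeff_card_prod_linear :
    (∏ i ∈ s, (C (a i) * X + C (b i))).coeff #s = ∏ i ∈ s, a i := by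
  have h := coeff_prod_of_natDegree_le (s := s) (fun i => C (a i) * X + C (b i)) 1
    fun i _ => natDegree_linear_le
  rw [mul_one] at h
  simp [h, coeff_C]

theorem degree_sub_C_coeff_mul_lt {f g : R[X]} {n : ℕ} (hf : f.natDegree ≤ n) (hg : g.Monic)
    (hgn : g.natDegree = n) : (f - C (f.coeff n) * g).degree < n := by
  rw [degree_lt_iff_coeff_zero]
  intro m hm
  rcases hm.eq_or_lt with rfl | hlt
  · simp [← hgn, hg.coeff_natDegree]
  · simp [coeff_eq_zero_of_natDegree_lt (hf.trans_lt hlt),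
      coeff_eq_zero_of_natDegree_lt (hgn.trans_lt hlt)]

end Polynomial

namespace Lagrange

variable {F : Type*} [Field F] {ι : Type*} [DecidableEq ι] {s : Finset ι} {v : ι → F}

theorem eval_eq_eval_nodal_mul_sum {P : F[X]} (hvs : Set.InjOn v s) (hP : P.degree < #s) {x : F}
    (hx : ∀ i ∈ s, x ≠ v i) :
    P.eval x = (nodal s v).eval x * ∑ i ∈ s, nodalWeight s v i * (x - v i)⁻¹ * P.eval (v i) := by
  conv_lhs => rw [eq_interpolate hvs hP]
  exact eval_interpolate_not_at_node _ hx

end Lagrange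

section PartialFractions

variable {F : Type*} [Field F] {ι : Type*} [Fintype ι] [DecidableEq ι]

open Lagrange in
theorem prod_sub_prod_eq_sum_prod_div (u v w : ι → F) (hw0 : ∀ k, w k ≠ 0)
    (hw : Function.Injective w) :
    ∏ i, u i - ∏ i, v i =
      ∑ k, (u k - v k) * ∏ j ∈ univ.erase k, (u j * w k - v j * w j) / (w k - w j) := by
  set f : F[X] := ∏ j, (C (u j) * X + C (-(v j * w j)))
  have hf : ∀ x, f.eval x = ∏ j, (u j * x - v j * w j) := fun x => by
    simp [f, eval_prod, sub_eq_add_neg]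
  have hfc : f.coeff #(univ : Finset ι) = ∏ i, u i := coeff_card_prod_linear _ _ _
  set p := f - C (f.coeff #(univ : Finset ι)) * nodal univ w
  have hp : p.degree < #(univ : Finset ι) :=
    degree_sub_C_coeff_mul_lt (natDegree_prod_linear_le _ _ _) nodal_monic natDegree_nodal
  have hinterp := eval_eq_eval_nodal_mul_sum hw.injOn hp (x := 0) fun i _ => (hw0 i).symm
  have hN : (nodal univ w).eval 0 ≠ 0 := by
    rw [eval_nodal]; exact prod_ne_zero_iff.mpr fun i _ => sub_ne_zero.mpr (hw0 i).symm
  have h0 : p.eval 0 = (∏ i, v i - ∏ i, u i) * (nodal univ w).eval 0 := by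
    simp only [p, eval_sub, eval_mul, eval_C, hf, hfc, eval_nodal, sub_mul,
      ← prod_mul_distrib]
    congr 1; exact prod_congr rfl fun j _ => by ring
  have hk : ∀ k,
      p.eval (w k) = (u k - v k) * w k * ∏ j ∈ univ.erase k, (u j * w k - v j * w j) := by
    intro k
    simp only [p, eval_sub, eval_mul, eval_nodal_at_node (mem_univ k), mul_zero, sub_zero, hf,
      ← mul_prod_erase univ _ (mem_univ k)]
    ring
  rw [h0, mul_comm, mul_eq_mul_left_iff, or_iff_left hN] at hinterp
  rw [← neg_sub, hinterp, ← sum_neg_distrib]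
  refine sum_congr rfl fun k _ => ?_
  rw [hk, nodalWeight, prod_div_distrib, div_eq_mul_inv _ (∏ j ∈ univ.erase k, _),
    ← prod_inv_distrib]
  field_simp [hw0 k]
  ring

variable (Q r : F)

def lagrangeNode (x : F) : F := (Q * (1 + x) + x * (1 + r + x)) / (x * (1 + x))

variable {Q r}

theorem lagrangeNode_sub_lagrangeNode {a b : F} (ha : a * (1 + a) ≠ 0) (hb : b * (1 + b) ≠ 0) :
    lagrangeNode Q r a - lagrangeNode Q r b =
      (b - a) * (Q * (1 + b) * (1 + a) + r * b * a) / (a * (1 + a) * (b * (1 + b))) := by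
  rw [lagrangeNode, lagrangeNode, div_sub_div _ _ ha hb]
  ring

theorem div_lagrangeNode_sub_lagrangeNode {a b : F} (ha : a * (1 + a) ≠ 0) (hb : b * (1 + b) ≠ 0)
    (hab : (b - a) * (Q * (1 + b) * (1 + a) + r * b * a) ≠ 0) :
    ((Q + b) * lagrangeNode Q r a - b * (1 + b) * lagrangeNode Q r b) /
        (lagrangeNode Q r a - lagrangeNode Q r b) =
      b * (1 + b) * (Q + (Q + r) * a + b + a * b) * (Q - b * a) /
        ((b - a) * (Q * (1 + b) * (1 + a) + r * b * a)) := by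
  have hnum : (Q + b) * lagrangeNode Q r a - b * (1 + b) * lagrangeNode Q r b =
      (Q + (Q + r) * a + b + a * b) * (Q - b * a) / (a * (1 + a)) := by
    obtain ⟨ha₀, ha₁⟩ := mul_ne_zero_iff.mp ha
    obtain ⟨hb₀, hb₁⟩ := mul_ne_zero_iff.mp hb
    rw [lagrangeNode, lagrangeNode, eq_div_iff ha]
    field_simp
    ring
  rw [hnum, lagrangeNode_sub_lagrangeNode ha hb, div_div_div_eq,
    div_eq_div_iff (mul_ne_zero ha hab) hab]
  ring

theorem prod_add_sub_prod_eq_sum (Q r : F) (x : ι → F) (hv : ∀ k, x k * (1 + x k) ≠ 0)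
    (hg : ∀ k, Q * (1 + x k) + x k * (1 + r + x k) ≠ 0)
    (hD : ∀ j k, j ≠ k →
      (x j - x k) * (Q * (1 + x j) * (1 + x k) + r * x j * x k) ≠ 0) :
    ∏ i, (Q + x i) - ∏ i, x i * (1 + x i) =
      ∑ k, (Q - x k ^ 2) * ∏ j ∈ univ.erase k,
        x j * (1 + x j) * (Q + (Q + r) * x k + x j + x k * x j) * (Q - x j * x k) /
          ((x j - x k) * (Q * (1 + x j) * (1 + x k) + r * x j * x k)) := by
  have hw : Function.Injective fun i => lagrangeNode Q r (x i) := by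
    intro j k hjk
    by_contra hne
    have hzero := sub_eq_zero.mpr hjk.symm
    rw [lagrangeNode_sub_lagrangeNode (hv k) (hv j)] at hzero
    exact div_ne_zero (hD j k hne) (mul_ne_zero (hv k) (hv j)) hzero
  rw [prod_sub_prod_eq_sum_prod_div _ _ _ (fun k => div_ne_zero (hg k) (hv k)) hw]
  refine sum_congr rfl fun k _ => ?_
  congr 1
  · ring
  · exact prod_congr rfl fun j hj =>
      div_lagrangeNode_sub_lagrangeNode (hv k) (hv j) (hD j k (ne_of_mem_erase hj))

end PartialFractions

theorem MvPolynomial.algebraMap_ne_zero_of_eval_ne_zero {σ R K : Type*} [CommRing R]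
    [CommRing K] [Algebra (MvPolynomial σ R) K] [IsFractionRing (MvPolynomial σ R) K]
    {p : MvPolynomial σ R} (x : σ → R) (h : MvPolynomial.eval x p ≠ 0) :
    algebraMap (MvPolynomial σ R) K p ≠ 0 := by
  rw [Ne, IsFractionRing.to_map_eq_zero_iff]
  rintro rfl
  exact h (map_zero _)

section NonVanishing

variable {n : ℕ}

theorem Xv_mul_one_add_Xv_ne_zero (i : Fin n) : Xv n i * (1 + Xv n i) ≠ 0 := by
  simp only [Xv, ← map_one (algebraMap (MvPolynomial (Fin n ⊕ Fin 2) ℚ) (RF n)), ← map_add,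
    ← map_mul]
  refine MvPolynomial.algebraMap_ne_zero_of_eval_ne_zero (fun _ => 1) ?_
  simp

theorem Qv_mul_one_add_Xv_add_ne_zero (i : Fin n) :
    Qv n * (1 + Xv n i) + Xv n i * (1 + rv n + Xv n i) ≠ 0 := by
  simp only [Xv, Qv, rv, ← map_one (algebraMap (MvPolynomial (Fin n ⊕ Fin 2) ℚ) (RF n)),
    ← map_add, ← map_mul]
  refine MvPolynomial.algebraMap_ne_zero_of_eval_ne_zero (fun _ => 1) ?_
  norm_num

theorem Xv_sub_Xv_mul_ne_zero {i j : Fin n} (hij : i ≠ j) :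
    (Xv n i - Xv n j) * (Qv n * (1 + Xv n i) * (1 + Xv n j) + rv n * Xv n i * Xv n j) ≠ 0 := by
  simp only [Xv, Qv, rv, ← map_one (algebraMap (MvPolynomial (Fin n ⊕ Fin 2) ℚ) (RF n)),
    ← map_add, ← map_mul, ← map_sub]
  refine MvPolynomial.algebraMap_ne_zero_of_eval_ne_zero
    (Sum.elim (fun i => (i : ℚ)) fun _ => 1) ?_
  have hij' : (i : ℚ) - j ≠ 0 := sub_ne_zero.mpr (by exact_mod_cast Fin.val_injective.ne hij)
  simp only [map_mul, map_add, map_sub, map_one, MvPolynomial.eval_X, Sum.elim_inl, Sum.elim_inr]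
  exact mul_ne_zero hij' (by positivity)

end NonVanishing

theorem stmt_12_general (n : ℕ) :
    ((∏ i : Fin n, (Qv n + Xv n i)) - ∏ i : Fin n, Xv n i * (1 + Xv n i)) *
      ∏ i : Fin n, ∏ j ∈ Finset.Ioi i,
        (Xv n j - Xv n i) *
          (Qv n * (1 + Xv n i) * (1 + Xv n j) + rv n * Xv n i * Xv n j) =
    (∏ i : Fin n, ∏ j ∈ Finset.Ioi i,
        (Xv n j - Xv n i) *
          (Qv n * (1 + Xv n i) * (1 + Xv n j) + rv n * Xv n i * Xv n j)) *
      ∑ k : Fin n, (Qv n - Xv n k ^ 2) *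
        ∏ j ∈ Finset.univ.erase k,
          Xv n j * (1 + Xv n j) *
              (Qv n + (Qv n + rv n) * Xv n k + Xv n j + Xv n k * Xv n j) *
              (Qv n - Xv n j * Xv n k) /
            ((Xv n j - Xv n k) *
              (Qv n * (1 + Xv n j) * (1 + Xv n k) + rv n * Xv n j * Xv n k)) := by
  rw [prod_add_sub_prod_eq_sum (Qv n) (rv n) (Xv n) Xv_mul_one_add_Xv_ne_zero
    Qv_mul_one_add_Xv_add_ne_zero fun _ _ => Xv_sub_Xv_mul_ne_zero, mul_comm]

/-- The key rational-function identity used in the induction proof. -/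
theorem stmt_12 (n : ℕ) (hn : 1 ≤ n) :
    ((∏ i : Fin n, (Qv n + Xv n i)) - ∏ i : Fin n, Xv n i * (1 + Xv n i)) *
      ∏ i : Fin n, ∏ j ∈ Finset.Ioi i,
        (Xv n j - Xv n i) *
          (Qv n * (1 + Xv n i) * (1 + Xv n j) + rv n * Xv n i * Xv n j) =
    (∏ i : Fin n, ∏ j ∈ Finset.Ioi i,
        (Xv n j - Xv n i) *
          (Qv n * (1 + Xv n i) * (1 + Xv n j) + rv n * Xv n i * Xv n j)) *
      ∑ k : Fin n, (Qv n - Xv n k ^ 2) *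
        ∏ j ∈ Finset.univ.erase k,
          Xv n j * (1 + Xv n j) *
              (Qv n + (Qv n + rv n) * Xv n k + Xv n j + Xv n k * Xv n j) *
              (Qv n - Xv n j * Xv n k) /
            ((Xv n j - Xv n k) *
              (Qv n * (1 + Xv n j) * (1 + Xv n k) + rv n * Xv n j * Xv n k)) :=
  stmt_12_general n
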